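/- arXiv:2205.13461 — 2 statements merged into one kernel-verified Lean document; each statement's English description precedes it below -/
import Mathlib

section
/- Let M_n be the minimum of n i.i.d. standard Gaussian random variables. Then for every constant c > 0 there exists N such that for all n ≥ N, Var(M_n) < c. In particular Var(M_n) → 0 as n → ∞. (Equivalently via symmetry, the variance of the maximum of n i.i.d. standard Gaussians tends to 0.) -/
/-!
Set `L = √(2 log n)`, so that `n · e^{-L²/2} = 1`, write `M` for the minimum and fix `ε > 0`.
Since `Var M ≤ E (M + L)²`, it suffices to bound `(M + L)²` pointwise:
* if `M < -L - ε`, then `(M + L)² ≤ M² ≤ ∑ᵢ Xᵢ² 1{Xᵢ < -L - ε}`, of expectation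
  `n E[X²; X > L + ε] ≲ L² e^{-εL}`;
* if `M > ε - L`, an event of probability `(1 - Φ(ε - L))ⁿ ≤ exp (-K e^{εL/2})`, then
  `(M + L)² ≤ 4 L²` unless `Xᵢ₀ > L` for a fixed `i₀`, and `E[X²; X > L] ≲ L² / n`;
* otherwise `(M + L)² ≤ ε²`.
Hence `limsup Var M ≤ ε²`.
-/

open Real MeasureTheory ProbabilityTheory Filter Set
open scoped Topology

lemma gaussianPDFReal_zero_one (x : ℝ) :
    gaussianPDFReal 0 1 x = (√(2 * π))⁻¹ * exp (-x ^ 2 / 2) := by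
  simp [gaussianPDFReal_def]

lemma gaussianPDFReal_zero_one_le (x : ℝ) : gaussianPDFReal 0 1 x ≤ exp (-x ^ 2 / 2) := by
  rw [gaussianPDFReal_zero_one]
  have : 1 ≤ √(2 * π) := Real.one_le_sqrt.2 (by linarith [pi_gt_three])
  exact mul_le_of_le_one_left (exp_pos _).le (inv_le_one_of_one_le₀ this)

lemma tendsto_sq_add_two_mul_exp_neg_sq_div_two :
    Tendsto (fun x : ℝ => (x ^ 2 + 2) * exp (-x ^ 2 / 2)) atTop (𝓝 0) := by
  have hu : Tendsto (fun x : ℝ => x ^ 2 / 2) atTop atTop :=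
    (tendsto_pow_atTop two_ne_zero).atTop_div_const two_pos
  have h := ((tendsto_pow_mul_exp_neg_atTop_nhds_zero 1).const_mul 2).add
    ((tendsto_pow_mul_exp_neg_atTop_nhds_zero 0).const_mul 2)
  rw [mul_zero, add_zero] at h
  refine (h.comp hu).congr fun x => ?_
  simp only [Function.comp_apply, neg_div]
  ring

lemma hasDerivAt_neg_sq_add_two_mul_exp_neg_sq_div_two (x : ℝ) :
    HasDerivAt (fun x => -((x ^ 2 + 2) * exp (-x ^ 2 / 2))) (x ^ 3 * exp (-x ^ 2 / 2)) x := by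
  have hexp : HasDerivAt (fun x => exp (-x ^ 2 / 2)) (exp (-x ^ 2 / 2) * (-x)) x := by
    convert ((hasDerivAt_pow 2 x).fun_neg.div_const 2).exp using 1
    push_cast
    ring
  have hpoly : HasDerivAt (fun x => x ^ 2 + 2) (2 * x) x := by
    simpa using (hasDerivAt_pow 2 x).add_const 2
  exact ((hpoly.mul hexp).neg).congr_deriv (by ring)

lemma integrableOn_Ioi_pow_three_mul_exp_neg_sq_div_two {s : ℝ} (hs : 0 ≤ s) :
    IntegrableOn (fun x => x ^ 3 * exp (-x ^ 2 / 2)) (Ioi s) :=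
  integrableOn_Ioi_deriv_of_nonneg'
    (fun x _ => hasDerivAt_neg_sq_add_two_mul_exp_neg_sq_div_two x)
    (fun x hx => by have : 0 < x := hs.trans_lt hx; positivity)
    (by simpa using tendsto_sq_add_two_mul_exp_neg_sq_div_two.neg)

lemma integral_Ioi_pow_three_mul_exp_neg_sq_div_two {s : ℝ} (hs : 0 ≤ s) :
    ∫ x in Ioi s, x ^ 3 * exp (-x ^ 2 / 2) = (s ^ 2 + 2) * exp (-s ^ 2 / 2) := by
  rw [integral_Ioi_of_hasDerivAt_of_nonneg'
    (fun x _ => hasDerivAt_neg_sq_add_two_mul_exp_neg_sq_div_two x)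
    (fun x hx => by have : 0 < x := hs.trans_lt hx; positivity)
    (by simpa using tendsto_sq_add_two_mul_exp_neg_sq_div_two.neg)]
  ring

lemma setIntegral_Ioi_sq_gaussianReal_le {s : ℝ} (hs : 1 ≤ s) :
    ∫ x in Ioi s, x ^ 2 ∂gaussianReal 0 1 ≤ (s ^ 2 + 2) * exp (-s ^ 2 / 2) := by
  rw [← integral_Ioi_pow_three_mul_exp_neg_sq_div_two (by linarith),
    gaussianReal_of_var_ne_zero _ one_ne_zero, restrict_withDensity measurableSet_Ioi,
    integral_withDensity_eq_integral_toReal_smul (measurable_gaussianPDF 0 1)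
      (.of_forall fun _ => gaussianPDF_lt_top)]
  refine integral_mono_of_nonneg (.of_forall fun x => by positivity)
    (integrableOn_Ioi_pow_three_mul_exp_neg_sq_div_two (by linarith)) ?_
  refine (ae_restrict_mem measurableSet_Ioi).mono fun x hx => ?_
  have hx1 : 1 ≤ x := hs.trans (le_of_lt hx)
  calc (gaussianPDF 0 1 x).toReal • x ^ 2 ≤ exp (-x ^ 2 / 2) * x ^ 2 := by
        rw [toReal_gaussianPDF, smul_eq_mul]
        gcongr
        exact gaussianPDFReal_zero_one_le x
    _ ≤ x ^ 3 * exp (-x ^ 2 / 2) := by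
        rw [mul_comm]
        gcongr
        nlinarith

lemma setIntegral_Iio_neg_sq_gaussianReal (s : ℝ) :
    ∫ x in Iio (-s), x ^ 2 ∂gaussianReal 0 1 = ∫ x in Ioi s, x ^ 2 ∂gaussianReal 0 1 := by
  have hsymm : (gaussianReal 0 1).map (fun x => -x) = gaussianReal 0 1 := by
    simp [gaussianReal_map_neg]
  conv_lhs => rw [← hsymm]
  rw [setIntegral_map measurableSet_Iio (by fun_prop) (by fun_prop)]
  have hpre : (fun x : ℝ => -x) ⁻¹' Iio (-s) = Ioi s := by ext; simp
  simp only [hpre, neg_sq]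

lemma measureReal_gaussianReal_eq_setIntegral (μ : ℝ) {v : NNReal} (hv : v ≠ 0) (s : Set ℝ) :
    (gaussianReal μ v).real s = ∫ x in s, gaussianPDFReal μ v x := by
  rw [measureReal_def, gaussianReal_apply_eq_integral _ hv,
    ENNReal.toReal_ofReal (integral_nonneg fun x => gaussianPDFReal_nonneg μ v x)]

lemma mul_gaussianPDFReal_le_measureReal_Iic {a b : ℝ} (hab : a ≤ b) (hb : b ≤ 0) :
    (b - a) * gaussianPDFReal 0 1 a ≤ (gaussianReal 0 1).real (Iic b) := by
  calc (b - a) * gaussianPDFReal 0 1 a = ∫ _ in Ioc a b, gaussianPDFReal 0 1 a := by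
        simp [hab]
    _ ≤ ∫ x in Ioc a b, gaussianPDFReal 0 1 x := by
        refine setIntegral_mono_on (by simp) (integrable_gaussianPDFReal 0 1).integrableOn
          measurableSet_Ioc fun x hx => ?_
        simp only [gaussianPDFReal_zero_one]
        exact mul_le_mul_of_nonneg_left (exp_le_exp.2 (by nlinarith [hx.1, hx.2]))
          (by positivity)
    _ = (gaussianReal 0 1).real (Ioc a b) :=
        (measureReal_gaussianReal_eq_setIntegral 0 one_ne_zero _).symm
    _ ≤ (gaussianReal 0 1).real (Iic b) := measureReal_mono Ioc_subset_Iic_self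

lemma lt_ciInf_iff_of_finite {ι α : Type*} [Finite ι] [Nonempty ι]
    [ConditionallyCompleteLinearOrder α] {a : α} {f : ι → α} : a < ⨅ i, f i ↔ ∀ i, a < f i := by
  refine ⟨fun h i => h.trans_le (ciInf_le (Finite.bddBelow_range f) i), fun h => ?_⟩
  obtain ⟨j, hj⟩ := exists_eq_ciInf_of_finite (f := f)
  exact hj ▸ h j

lemma sq_iInf_add_le {ι : Type*} [Fintype ι] (x : ι → ℝ) (i₀ : ι) {ε L : ℝ} (hε : 0 ≤ ε)
    (hL : 0 ≤ L) :
    ((⨅ i, x i) + L) ^ 2 ≤ ε ^ 2 + ∑ i, (Iio (-(L + ε))).indicator (· ^ 2) (x i)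
      + (Ioi (ε - L)).indicator (fun _ => 4 * L ^ 2) (⨅ i, x i)
      + 4 * (Ioi L).indicator (· ^ 2) (x i₀) := by
  have : Nonempty ι := ⟨i₀⟩
  obtain ⟨j, hj⟩ := exists_eq_ciInf_of_finite (f := x)
  set y := ⨅ i, x i
  have hy₀ : y ≤ x i₀ := ciInf_le (Finite.bddBelow_range x) i₀
  have hsum : 0 ≤ ∑ i, (Iio (-(L + ε))).indicator (· ^ 2) (x i) :=
    Finset.sum_nonneg fun i _ => indicator_nonneg (fun _ _ => sq_nonneg _) _
  have hup : 0 ≤ (Ioi (ε - L)).indicator (fun _ => 4 * L ^ 2) y :=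
    indicator_nonneg (fun _ _ => by positivity) _
  have hi₀ : 0 ≤ (Ioi L).indicator (· ^ 2) (x i₀) :=
    indicator_nonneg (fun _ _ => sq_nonneg _) _
  rcases lt_or_ge y (-(L + ε)) with hlow | hmid
  · have hj' : (Iio (-(L + ε))).indicator (· ^ 2) (x j) = y ^ 2 := by
      rw [hj, indicator_of_mem (show y ∈ Iio (-(L + ε)) from hlow)]
    have := Finset.single_le_sum (f := fun i => (Iio (-(L + ε))).indicator (· ^ 2) (x i))
      (fun i _ => indicator_nonneg (fun _ _ => sq_nonneg _) _) (Finset.mem_univ j)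
    nlinarith
  rcases le_or_gt y (ε - L) with hmid' | hhigh
  · nlinarith
  rw [indicator_of_mem (show y ∈ Ioi (ε - L) from hhigh)] at hup ⊢
  rcases le_or_gt (x i₀) L with hx₀ | hx₀
  · nlinarith
  · rw [indicator_of_mem (show x i₀ ∈ Ioi L from hx₀)]
    nlinarith

namespace ProbabilityTheory

variable {Ω : Type*} [MeasurableSpace Ω] {P : Measure Ω} {μ : Measure ℝ}

lemma HasLaw.integrable_indicator_sq {Z : Ω → ℝ} (hZ : HasLaw Z μ P)
    (hμ : Integrable (· ^ 2) μ) {s : Set ℝ} (hs : MeasurableSet s) :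
    Integrable (fun ω => s.indicator (· ^ 2) (Z ω)) P := by
  rw [← hZ.map_eq] at hμ
  exact (hμ.indicator hs).comp_aemeasurable hZ.aemeasurable

lemma HasLaw.integral_indicator_sq {Z : Ω → ℝ} (hZ : HasLaw Z μ P) {s : Set ℝ}
    (hs : MeasurableSet s) : ∫ ω, s.indicator (· ^ 2) (Z ω) ∂P = ∫ x in s, x ^ 2 ∂μ := by
  rw [← integral_indicator hs]
  exact hZ.integral_comp ((measurable_id.pow_const 2).indicator hs).aestronglyMeasurable

variable {ι : Type*} [Fintype ι] [Nonempty ι] {X : ι → Ω → ℝ}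

lemma measureReal_lt_iInf (hindep : iIndepFun X P) (hlaw : ∀ i, HasLaw (X i) μ P) (x : ℝ) :
    P.real {ω | x < ⨅ i, X i ω} = μ.real (Ioi x) ^ Fintype.card ι := by
  have hset : {ω | x < ⨅ i, X i ω} = ⋂ i, X i ⁻¹' Ioi x := by
    ext ω
    simp [lt_ciInf_iff_of_finite]
  have hlaw' : ∀ i, P (X i ⁻¹' Ioi x) = μ (Ioi x) := fun i =>
    (hlaw i).measure_eq (p := (x < ·)) measurableSet_Ioi
  rw [hset, measureReal_def, hindep.meas_iInter fun i => ⟨Ioi x, measurableSet_Ioi, rfl⟩,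
    Finset.prod_congr rfl fun i _ => hlaw' i, Finset.prod_const, Finset.card_univ,
    ENNReal.toReal_pow, measureReal_def]

lemma measureReal_lt_iInf_le [IsProbabilityMeasure μ] (hindep : iIndepFun X P)
    (hlaw : ∀ i, HasLaw (X i) μ P) (x : ℝ) :
    P.real {ω | x < ⨅ i, X i ω} ≤ exp (-(Fintype.card ι * μ.real (Iic x))) := by
  rw [measureReal_lt_iInf hindep hlaw, ← compl_Iic, probReal_compl_eq_one_sub measurableSet_Iic,
    neg_mul_eq_mul_neg, exp_nat_mul]
  exact pow_le_pow_left₀ (by simp) (one_sub_le_exp_neg _) _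

theorem variance_iInf_le [IsProbabilityMeasure P] [IsProbabilityMeasure μ]
    (hμ : Integrable (· ^ 2) μ) (hindep : iIndepFun X P) (hlaw : ∀ i, HasLaw (X i) μ P)
    {ε L : ℝ} (hε : 0 ≤ ε) (hL : 0 ≤ L) :
    Var[fun ω => ⨅ i, X i ω; P] ≤ ε ^ 2 + Fintype.card ι * ∫ x in Iio (-(L + ε)), x ^ 2 ∂μ
      + 4 * L ^ 2 * exp (-(Fintype.card ι * μ.real (Iic (ε - L))))
      + 4 * ∫ x in Ioi L, x ^ 2 ∂μ := by
  obtain ⟨i₀⟩ := ‹Nonempty ι›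
  set Y := fun ω => ⨅ i, X i ω
  have hY : AEMeasurable Y P := .iInf fun i => (hlaw i).aemeasurable
  have hlow : ∀ i, Integrable (fun ω => (Iio (-(L + ε))).indicator (· ^ 2) (X i ω)) P :=
    fun i => (hlaw i).integrable_indicator_sq hμ measurableSet_Iio
  have hhigh : Integrable (fun ω => (Ioi L).indicator (· ^ 2) (X i₀ ω)) P :=
    (hlaw i₀).integrable_indicator_sq hμ measurableSet_Ioi
  have hmin : Integrable (fun ω => (Ioi (ε - L)).indicator (fun _ => 4 * L ^ 2) (Y ω)) P :=
    ((integrable_const _).indicator measurableSet_Ioi).comp_aemeasurable hY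
  have hint₁ :=
    (integrable_const (ε ^ 2)).fun_add (integrable_finsetSum Finset.univ fun i _ => hlow i)
  have hint₂ := hint₁.fun_add hmin
  have hint_min : ∫ ω, (Ioi (ε - L)).indicator (fun _ => 4 * L ^ 2) (Y ω) ∂P
      = 4 * L ^ 2 * P.real {ω | ε - L < Y ω} := by
    rw [← integral_map hY
        (stronglyMeasurable_const.indicator measurableSet_Ioi).aestronglyMeasurable,
      integral_indicator_const _ measurableSet_Ioi,
      map_measureReal_apply_of_aemeasurable hY measurableSet_Ioi, smul_eq_mul, mul_comm]
    rfl
  calc Var[Y; P] = Var[fun ω => Y ω + L; P] :=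
        (variance_add_const hY.aestronglyMeasurable L).symm
    _ ≤ ∫ ω, (Y ω + L) ^ 2 ∂P := variance_le_expectation_sq (by fun_prop)
    _ ≤ ∫ ω, (ε ^ 2 + ∑ i, (Iio (-(L + ε))).indicator (· ^ 2) (X i ω)
          + (Ioi (ε - L)).indicator (fun _ => 4 * L ^ 2) (Y ω)
          + 4 * (Ioi L).indicator (· ^ 2) (X i₀ ω)) ∂P :=
        integral_mono_of_nonneg (.of_forall fun _ => sq_nonneg _)
          (hint₂.fun_add (hhigh.const_mul 4))
          (.of_forall fun ω => sq_iInf_add_le (X · ω) i₀ hε hL)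
    _ = ε ^ 2 + Fintype.card ι * ∫ x in Iio (-(L + ε)), x ^ 2 ∂μ
          + 4 * L ^ 2 * P.real {ω | ε - L < Y ω} + 4 * ∫ x in Ioi L, x ^ 2 ∂μ := by
        rw [integral_add hint₂ (hhigh.const_mul 4), integral_add hint₁ hmin,
          integral_add (integrable_const _) (integrable_finsetSum _ fun i _ => hlow i),
          integral_finsetSum _ fun i _ => hlow i, integral_const_mul, hint_min]
        simp [(hlaw _).integral_indicator_sq measurableSet_Iio,
          (hlaw i₀).integral_indicator_sq measurableSet_Ioi]
    _ ≤ _ := by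
        gcongr
        exact measureReal_lt_iInf_le hindep hlaw _

end ProbabilityTheory

lemma tendsto_sq_add_mul_exp_neg_mul_atTop {b : ℝ} (hb : 0 < b) (c d : ℝ) :
    Tendsto (fun x => ((x + c) ^ 2 + d) * exp (-(b * x))) atTop (𝓝 0) := by
  have h (k : ℕ) := (tendsto_pow_mul_exp_neg_atTop_nhds_zero k).comp
    (tendsto_id.const_mul_atTop hb)
  have := ((h 2).const_mul (b ^ 2)⁻¹).add (((h 1).const_mul (2 * c / b)).add
    ((h 0).const_mul (c ^ 2 + d)))
  simp only [mul_zero, add_zero] at this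
  refine this.congr fun x => ?_
  simp only [Function.comp_apply, id]
  field_simp
  ring

lemma exp_neg_le_inv {y : ℝ} (hy : 0 < y) : exp (-y) ≤ y⁻¹ := by
  rw [exp_neg]
  exact inv_anti₀ hy ((lt_add_one y).le.trans (add_one_le_exp y))

lemma tendsto_setIntegral_Ioi_sq_gaussianReal :
    Tendsto (fun L => ∫ x in Ioi L, x ^ 2 ∂gaussianReal 0 1) atTop (𝓝 0) := by
  refine tendsto_of_tendsto_of_tendsto_of_le_of_le' tendsto_const_nhds
    tendsto_sq_add_two_mul_exp_neg_sq_div_two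
    (.of_forall fun L => setIntegral_nonneg measurableSet_Ioi fun x _ => sq_nonneg x) ?_
  filter_upwards [eventually_ge_atTop 1] with L hL
  exact setIntegral_Ioi_sq_gaussianReal_le hL

lemma tendsto_exp_mul_setIntegral_Iio_sq_gaussianReal {ε : ℝ} (hε : 0 < ε) :
    Tendsto (fun L => exp (L ^ 2 / 2) * ∫ x in Iio (-(L + ε)), x ^ 2 ∂gaussianReal 0 1)
      atTop (𝓝 0) := by
  refine tendsto_of_tendsto_of_tendsto_of_le_of_le' tendsto_const_nhds
    (tendsto_sq_add_mul_exp_neg_mul_atTop hε ε 2) ?_ ?_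
  · exact .of_forall fun L => mul_nonneg (exp_pos _).le
      (setIntegral_nonneg measurableSet_Iio fun x _ => sq_nonneg x)
  filter_upwards [eventually_ge_atTop 1] with L hL
  rw [setIntegral_Iio_neg_sq_gaussianReal]
  calc exp (L ^ 2 / 2) * ∫ x in Ioi (L + ε), x ^ 2 ∂gaussianReal 0 1
      ≤ exp (L ^ 2 / 2) * (((L + ε) ^ 2 + 2) * exp (-(L + ε) ^ 2 / 2)) := by
        gcongr
        exact setIntegral_Ioi_sq_gaussianReal_le (by linarith)
    _ = ((L + ε) ^ 2 + 2) * exp (-(ε * L)) * exp (-ε ^ 2 / 2) := by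
        rw [mul_left_comm, mul_assoc, ← exp_add, ← exp_add]
        ring_nf
    _ ≤ ((L + ε) ^ 2 + 2) * exp (-(ε * L)) :=
        mul_le_of_le_one_right (by positivity) (exp_le_one_iff.2 (by nlinarith))

lemma tendsto_sq_mul_exp_neg_exp_mul_measureReal_Iic_gaussianReal {ε : ℝ} (hε : 0 < ε) :
    Tendsto (fun L => L ^ 2 * exp (-(exp (L ^ 2 / 2) * (gaussianReal 0 1).real (Iic (ε - L)))))
      atTop (𝓝 0) := by
  set K := ε / 2 * (√(2 * π))⁻¹ * exp (-ε ^ 2 / 8)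
  have hK : 0 < K := by positivity
  -- `K e^{εL/2} / n = (ε/2) φ(L - ε/2)` bounds the Gaussian mass of `(ε/2 - L, ε - L]`
  have hlower : ∀ L, ε ≤ L → K * exp (ε / 2 * L)
      ≤ exp (L ^ 2 / 2) * (gaussianReal 0 1).real (Iic (ε - L)) := fun L hL => by
    have := mul_gaussianPDFReal_le_measureReal_Iic (a := ε / 2 - L) (b := ε - L)
      (by linarith) (by linarith)
    calc K * exp (ε / 2 * L)
        = ε / 2 * (√(2 * π))⁻¹ * exp (L ^ 2 / 2 + -(ε / 2 - L) ^ 2 / 2) := by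
          rw [show L ^ 2 / 2 + -(ε / 2 - L) ^ 2 / 2 = -ε ^ 2 / 8 + ε / 2 * L by ring, exp_add]
          ring
      _ = exp (L ^ 2 / 2) * ((ε - L - (ε / 2 - L)) * gaussianPDFReal 0 1 (ε / 2 - L)) := by
          rw [gaussianPDFReal_zero_one, exp_add]
          ring
      _ ≤ _ := by gcongr
  have hlim := (tendsto_sq_add_mul_exp_neg_mul_atTop (half_pos hε) 0 0).const_mul K⁻¹
  rw [mul_zero] at hlim
  refine tendsto_of_tendsto_of_tendsto_of_le_of_le' tendsto_const_nhds hlim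
    (.of_forall fun L => by positivity) ?_
  filter_upwards [eventually_ge_atTop ε] with L hL
  calc L ^ 2 * exp (-(exp (L ^ 2 / 2) * (gaussianReal 0 1).real (Iic (ε - L))))
      ≤ L ^ 2 * exp (-(K * exp (ε / 2 * L))) := by
        gcongr ?_ * exp (-?_)
        exact hlower L hL
    _ ≤ L ^ 2 * (K * exp (ε / 2 * L))⁻¹ := by gcongr; exact exp_neg_le_inv (by positivity)
    _ = K⁻¹ * (((L + 0) ^ 2 + 0) * exp (-(ε / 2 * L))) := by
        rw [exp_neg]
        field_simp
        ring

/-- The variance of the minimum of `n` i.i.d. standard Gaussians tends to `0`: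
for every `c > 0` there exists `N` such that for all `n ≥ N`, `Var(min_i X n i) < c`. -/
theorem stmt_10 {Ω : Type*} [MeasurableSpace Ω] (P : Measure Ω) [IsProbabilityMeasure P]
    (X : (n : ℕ) → Fin n → Ω → ℝ)
    (hmeas : ∀ n i, Measurable (X n i))
    (hindep : ∀ n, iIndepFun (X n) P)
    (hlaw : ∀ n i, Measure.map (X n i) P = gaussianReal 0 1) :
    ∀ c : ℝ, 0 < c → ∃ N : ℕ, ∀ n, N ≤ n →
      variance (fun ω => ⨅ i, X n i ω) P < c := by
  intro c hc
  set ε := √(c / 2)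
  have hε : 0 < ε := sqrt_pos.2 (half_pos hc)
  have hεc : ε ^ 2 < c := by rw [sq_sqrt (half_pos hc).le]; linarith
  have hbound : Tendsto (fun L => ε ^ 2
      + exp (L ^ 2 / 2) * ∫ x in Iio (-(L + ε)), x ^ 2 ∂gaussianReal 0 1
      + 4 * L ^ 2 * exp (-(exp (L ^ 2 / 2) * (gaussianReal 0 1).real (Iic (ε - L))))
      + 4 * ∫ x in Ioi L, x ^ 2 ∂gaussianReal 0 1) atTop (𝓝 (ε ^ 2)) := by
    simpa [mul_assoc] using
      ((tendsto_const_nhds.add (tendsto_exp_mul_setIntegral_Iio_sq_gaussianReal hε)).add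
        ((tendsto_sq_mul_exp_neg_exp_mul_measureReal_Iic_gaussianReal hε).const_mul 4)).add
        (tendsto_setIntegral_Ioi_sq_gaussianReal.const_mul 4)
  have hL : Tendsto (fun n : ℕ => √(2 * log n)) atTop atTop := tendsto_sqrt_atTop.comp
    ((tendsto_log_atTop.comp tendsto_natCast_atTop_atTop).const_mul_atTop two_pos)
  obtain ⟨N, hN⟩ := eventually_atTop.1
    ((hL.eventually (hbound.eventually (gt_mem_nhds hεc))).and (eventually_ge_atTop 1))
  refine ⟨N, fun n hn => ?_⟩
  obtain ⟨hlt, hn⟩ := hN n hn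
  have : Nonempty (Fin n) := ⟨⟨0, hn⟩⟩
  have hexp : exp (√(2 * log n) ^ 2 / 2) = n := by
    rw [sq_sqrt (mul_nonneg zero_le_two (log_natCast_nonneg n)),
      mul_div_cancel_left₀ _ two_ne_zero, exp_log (by exact_mod_cast hn)]
  rw [hexp] at hlt
  refine (variance_iInf_le (memLp_id_gaussianReal 2).integrable_sq (hindep n)
    (fun i => ⟨(hmeas n i).aemeasurable, hlaw n i⟩) hε.le (sqrt_nonneg (2 * log n))).trans_lt ?_
  simpa using hlt
end

section
/- Suppose the sender's posterior distribution over θ given samples x⃗ has density h_S(θ | x⃗) = ∏_i f(x_i - θ) / ∫ ∏_i f(x_i - t) dt, and g = f'/f satisfies |g'| ≤ c_1 everywhere. Then the posterior mean θ_S(x⃗) satisfies |∂θ_S(x⃗)/∂x_i| ≤ c_1 (Var_{posterior}(θ) + 2 θ_S(x⃗)²) for each coordinate i. -/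
open MeasureTheory Real Set

/-!
Write `g = f' / f = (log f)'`. Differentiating under the integral sign, the quotient rule gives
`∂θ_S/∂x_i = Cov_post(θ, g(x_i - θ))`. As `g` is `c₁`-Lipschitz,
`|Cov(θ, g(x_i - θ))| = |E[(θ - θ_S)(g(x_i - θ) - g(x_i - θ_S))]| ≤ c₁ Var(θ)`.

Differentiation under the integral sign is justified by the domination
`f(s - t) ≤ e^{c₁/2} (f(x_i - 1 - t) + f(x_i + 1 - t))` for `|s - x_i| ≤ 1`: the function
`σ ↦ log f(σ - t) + c₁ (σ - x_i)² / 2` is convex, so on `[x_i - 1, x_i + 1]` it is largest at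
an endpoint.
-/

section Semiconvex

variable {φ φ' : ℝ → ℝ} {c : ℝ}

theorem convexOn_add_sq_of_abs_deriv_sub_le (hφ : ∀ x, HasDerivAt φ (φ' x) x)
    (hφ' : ∀ u v, |φ' u - φ' v| ≤ c * |u - v|) (a : ℝ) :
    ConvexOn ℝ univ (fun x => φ x + c / 2 * (x - a) ^ 2) := by
  have hψ : ∀ x, HasDerivAt (fun x => φ x + c / 2 * (x - a) ^ 2) (φ' x + c * (x - a)) x := by
    intro x
    exact ((hφ x).add ((((hasDerivAt_id' x).sub_const a).pow 2).const_mul (c / 2))).congr_deriv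
      (by push_cast; ring)
  refine Monotone.convexOn_univ_of_deriv (fun x => (hψ x).differentiableAt) fun u v huv => ?_
  rw [(hψ u).deriv, (hψ v).deriv]
  have h := hφ' v u
  rw [abs_of_nonneg (sub_nonneg.2 huv)] at h
  linarith [neg_abs_le (φ' v - φ' u)]

theorem le_max_add_of_abs_deriv_sub_le (hφ : ∀ x, HasDerivAt φ (φ' x) x)
    (hφ' : ∀ u v, |φ' u - φ' v| ≤ c * |u - v|) {a s : ℝ} (hs : s ∈ Icc (a - 1) (a + 1)) :
    φ s ≤ max (φ (a - 1)) (φ (a + 1)) + c / 2 := by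
  have hc : 0 ≤ c := by simpa using (abs_nonneg _).trans (hφ' 1 0)
  have h := (convexOn_add_sq_of_abs_deriv_sub_le hφ hφ' a).le_max_of_mem_Icc
    (mem_univ _) (mem_univ _) hs
  simp only [sub_sub_cancel_left, add_sub_cancel_left, even_two, Even.neg_pow, one_pow,
    mul_one, max_add_add_right] at h
  nlinarith [sq_nonneg (s - a)]

end Semiconvex

theorem abs_integral_mul_sub_le_of_abs_sub_le {Q h : ℝ → ℝ} {c m : ℝ}
    (hQ : ∀ t, 0 ≤ Q t) (hh : ∀ u v, |h u - h v| ≤ c * |u - v|) (IQ : Integrable Q)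
    (ItQ : Integrable fun t => t * Q t) (It2Q : Integrable fun t => t ^ 2 * Q t)
    (IhQ : Integrable fun t => h t * Q t) (IthQ : Integrable fun t => t * (h t * Q t))
    (hm : ∫ t, t * Q t = m * ∫ t, Q t) :
    |(∫ t, t * (h t * Q t)) - m * ∫ t, h t * Q t| ≤
      c * ((∫ t, t ^ 2 * Q t) - m ^ 2 * ∫ t, Q t) := by
  have hcov : (∫ t, t * (h t * Q t)) - m * ∫ t, h t * Q t =
      ∫ t, (t - m) * (h t - h m) * Q t := by
    have hexp : ∀ t, (t - m) * (h t - h m) * Q t =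
        (t * (h t * Q t) - m * (h t * Q t)) - h m * (t * Q t - m * Q t) := fun t => by ring
    simp_rw [hexp]
    rw [integral_sub, integral_sub IthQ (IhQ.const_mul m), integral_const_mul, integral_const_mul,
      integral_sub ItQ (IQ.const_mul m), integral_const_mul, hm]
    · ring
    · exact IthQ.sub (IhQ.const_mul m)
    · exact (ItQ.sub (IQ.const_mul m)).const_mul _
  have hexp2 : ∀ t, c * ((t - m) ^ 2 * Q t) =
      c * (t ^ 2 * Q t - 2 * m * (t * Q t) + m ^ 2 * Q t) := fun t => by ring
  have Ivar : Integrable fun t => c * ((t - m) ^ 2 * Q t) := by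
    simp_rw [hexp2]
    exact ((It2Q.sub (ItQ.const_mul _)).add (IQ.const_mul _)).const_mul c
  have hvar : ∫ t, c * ((t - m) ^ 2 * Q t) = c * ((∫ t, t ^ 2 * Q t) - m ^ 2 * ∫ t, Q t) := by
    simp_rw [hexp2]
    rw [integral_const_mul, integral_add, integral_sub It2Q (ItQ.const_mul _), integral_const_mul,
      integral_const_mul, hm]
    · ring
    · exact It2Q.sub (ItQ.const_mul _)
    · exact IQ.const_mul _
  rw [hcov, ← hvar]
  refine abs_integral_le_integral_abs.trans
    (integral_mono_of_nonneg (.of_forall fun t => abs_nonneg _) Ivar (.of_forall fun t => ?_))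
  calc |(t - m) * (h t - h m) * Q t| = |t - m| * |h t - h m| * Q t := by
        rw [abs_mul, abs_mul, abs_of_nonneg (hQ t)]
    _ ≤ |t - m| * (c * |t - m|) * Q t := by gcongr; exact hQ t; exact hh t m
    _ = c * ((t - m) ^ 2 * Q t) := by rw [← sq_abs (t - m)]; ring

noncomputable def posteriorMean (Q : ℝ → ℝ) : ℝ := (∫ t, t * Q t) / ∫ t, Q t

noncomputable def posteriorVariance (Q : ℝ → ℝ) : ℝ :=
  (∫ t, t ^ 2 * Q t) / (∫ t, Q t) - posteriorMean Q ^ 2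

section LogDeriv

variable {f : ℝ → ℝ} {c : ℝ}

theorem abs_logDeriv_sub_le (hpos : ∀ x, 0 < f x) (hf : ContDiff ℝ 2 f)
    (hg : ∀ x, |deriv (logDeriv f) x| ≤ c) (u v : ℝ) :
    |logDeriv f u - logDeriv f v| ≤ c * |u - v| := by
  have hd : Differentiable ℝ (logDeriv f) :=
    hf.differentiable_deriv_two.div (hf.differentiable two_ne_zero) fun y => (hpos y).ne'
  simpa only [Real.norm_eq_abs] using Convex.norm_image_sub_le_of_norm_deriv_le
    (fun y _ => hd y) (fun y _ => (Real.norm_eq_abs _).trans_le (hg y)) convex_univ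
    (mem_univ v) (mem_univ u)

theorem le_exp_mul_add_of_mem_Icc (hpos : ∀ x, 0 < f x) (hf : ContDiff ℝ 2 f)
    (hg : ∀ x, |deriv (logDeriv f) x| ≤ c) (t : ℝ) {a s : ℝ}
    (hs : s ∈ Icc (a - 1) (a + 1)) :
    f (s - t) ≤ exp (c / 2) * (f (a - 1 - t) + f (a + 1 - t)) := by
  have hlog : log (f (s - t)) ≤ max (log (f (a - 1 - t))) (log (f (a + 1 - t))) + c / 2 :=
    le_max_add_of_abs_deriv_sub_le (φ' := fun σ => logDeriv f (σ - t))
      (fun σ => (((hf.differentiable two_ne_zero (σ - t)).hasDerivAt.comp σ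
        ((hasDerivAt_id' σ).sub_const t)).log (hpos _).ne').congr_deriv
          (by rw [mul_one, logDeriv_apply]; rfl))
      (fun u v => by simpa using abs_logDeriv_sub_le hpos hf hg (u - t) (v - t)) hs
  calc f (s - t) = exp (log (f (s - t))) := (exp_log (hpos _)).symm
    _ ≤ exp (max (log (f (a - 1 - t))) (log (f (a + 1 - t))) + c / 2) := exp_le_exp.2 hlog
    _ = exp (c / 2) * max (f (a - 1 - t)) (f (a + 1 - t)) := by
      rw [exp_add, Monotone.map_max exp_monotone, exp_log (hpos _), exp_log (hpos _), mul_comm]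
    _ ≤ exp (c / 2) * (f (a - 1 - t) + f (a + 1 - t)) := by
      gcongr; exact max_le_add_of_nonneg (hpos _).le (hpos _).le

theorem hasDerivAt_integral_mul_comp_sub (hpos : ∀ x, 0 < f x) (hf : ContDiff ℝ 2 f)
    (hg : ∀ x, |deriv (logDeriv f) x| ≤ c) {w : ℝ → ℝ} (hw : AEStronglyMeasurable w)
    (hI : ∀ s, Integrable fun t => w t * f (s - t))
    (hI' : ∀ s, Integrable fun t => t * (w t * f (s - t))) (s₀ : ℝ) :
    Integrable (fun t => w t * deriv f (s₀ - t)) ∧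
      HasDerivAt (fun s => ∫ t, w t * f (s - t)) (∫ t, w t * deriv f (s₀ - t)) s₀ := by
  have hc : 0 ≤ c := (abs_nonneg _).trans (hg 0)
  set A := |logDeriv f s₀| + c
  set bound : ℝ → ℝ := fun t => exp (c / 2) *
    ((A + c * |t|) * (|w t * f (s₀ - 1 - t)| + |w t * f (s₀ + 1 - t)|))
  have hbound : Integrable bound := by
    refine ((((hI (s₀ - 1)).abs.const_mul A).add ((hI (s₀ + 1)).abs.const_mul A)).add
      (((hI' (s₀ - 1)).abs.const_mul c).add ((hI' (s₀ + 1)).abs.const_mul c))).const_mul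
      (exp (c / 2)) |>.congr (.of_forall fun t => ?_)
    simp only [bound, Pi.add_apply, abs_mul]
    ring
  have hderiv_comp : Continuous fun t => deriv f (s₀ - t) :=
    (hf.continuous_deriv one_le_two).comp (continuous_const.sub continuous_id)
  refine hasDerivAt_integral_of_dominated_loc_of_deriv_le (bound := bound)
    (F' := fun s t => w t * deriv f (s - t))
    (Icc_mem_nhds (sub_lt_self s₀ one_pos) (lt_add_one s₀))
    (.of_forall fun s => (hI s).aestronglyMeasurable) (hI s₀)
    (hw.mul hderiv_comp.aestronglyMeasurable)
    (.of_forall fun t s hs => ?_) hbound (.of_forall fun t s _ => ?_)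
  · have hst : |s - t - s₀| ≤ 1 + |t| := by
      rw [abs_le]
      constructor <;> linarith [hs.1, hs.2, neg_abs_le t, le_abs_self t]
    have hlog : |logDeriv f (s - t)| ≤ A + c * |t| := by
      have := abs_logDeriv_sub_le hpos hf hg (s - t) s₀
      nlinarith [abs_sub_abs_le_abs_sub (logDeriv f (s - t)) (logDeriv f s₀)]
    calc ‖w t * deriv f (s - t)‖ = |w t| * (|logDeriv f (s - t)| * f (s - t)) := by
          rw [norm_mul, norm_eq_abs, norm_eq_abs, logDeriv_apply, abs_div, abs_of_pos (hpos _),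
            div_mul_cancel₀ _ (hpos _).ne']
      _ ≤ |w t| * ((A + c * |t|) * (exp (c / 2) * (f (s₀ - 1 - t) + f (s₀ + 1 - t)))) := by
          gcongr
          · exact (hpos _).le
          · exact le_exp_mul_add_of_mem_Icc hpos hf hg t hs
      _ = bound t := by
          simp only [bound, abs_mul, abs_of_pos (hpos _)]
          ring
  · simpa using ((hf.differentiable two_ne_zero (s - t)).hasDerivAt.comp s
      ((hasDerivAt_id' s).sub_const t)).const_mul (w t)

theorem abs_le_mul_posteriorVariance_of_hasDerivAt (hpos : ∀ x, 0 < f x)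
    (hf : ContDiff ℝ 2 f) (hg : ∀ x, |deriv (logDeriv f) x| ≤ c) {R : ℝ → ℝ}
    (hR : AEStronglyMeasurable R) (hRpos : ∀ t, 0 < R t)
    (hI0 : ∀ s, Integrable fun t => R t * f (s - t))
    (hI1 : ∀ s, Integrable fun t => t * (R t * f (s - t)))
    (hI2 : ∀ s, Integrable fun t => t ^ 2 * (R t * f (s - t))) {s₀ D : ℝ}
    (hD : HasDerivAt (fun s => posteriorMean fun t => R t * f (s - t)) D s₀) :
    |D| ≤ c * posteriorVariance fun t => R t * f (s₀ - t) := by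
  have hQpos : ∀ t, 0 < R t * f (s₀ - t) := fun t => mul_pos (hRpos t) (hpos _)
  obtain ⟨IRf', hden⟩ := hasDerivAt_integral_mul_comp_sub hpos hf hg hR hI0 hI1 s₀
  obtain ⟨ItRf', hnum⟩ := hasDerivAt_integral_mul_comp_sub hpos hf hg (w := fun t => t * R t)
    (aestronglyMeasurable_id.mul hR) (fun s => by simpa only [mul_assoc] using hI1 s)
    (fun s => (hI2 s).congr (.of_forall fun t => by ring)) s₀
  simp only [mul_assoc] at ItRf' hnum
  have hZ : 0 < ∫ t, R t * f (s₀ - t) := by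
    rw [integral_pos_iff_support_of_nonneg (fun t => (hQpos t).le) (hI0 s₀)]
    simp [Function.support, (hQpos _).ne']
  set m := posteriorMean fun t => R t * f (s₀ - t)
  have hm : ∫ t, t * (R t * f (s₀ - t)) = m * ∫ t, R t * f (s₀ - t) :=
    (div_mul_cancel₀ _ hZ.ne').symm
  have hD_eq : D = ((∫ t, t * (R t * deriv f (s₀ - t))) - m * ∫ t, R t * deriv f (s₀ - t)) /
      ∫ t, R t * f (s₀ - t) := by
    rw [hD.unique (hnum.div hden hZ.ne'), hm]
    field_simp
  have hlogDeriv_mul :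
      ∀ t, logDeriv f (s₀ - t) * (R t * f (s₀ - t)) = R t * deriv f (s₀ - t) := fun t => by
    rw [logDeriv_apply]
    field_simp [(hpos (s₀ - t)).ne']
  have hcov := abs_integral_mul_sub_le_of_abs_sub_le (h := fun t => logDeriv f (s₀ - t))
    (fun t => (hQpos t).le)
    (fun u v => by simpa [abs_sub_comm] using abs_logDeriv_sub_le hpos hf hg (s₀ - u) (s₀ - v))
    (hI0 s₀) (hI1 s₀) (hI2 s₀) (IRf'.congr (.of_forall fun t => (hlogDeriv_mul t).symm))
    (ItRf'.congr (.of_forall fun t => by simp only [hlogDeriv_mul])) hm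
  simp only [hlogDeriv_mul] at hcov
  have hvar : (posteriorVariance fun t => R t * f (s₀ - t)) * ∫ t, R t * f (s₀ - t) =
      (∫ t, t ^ 2 * (R t * f (s₀ - t))) - m ^ 2 * ∫ t, R t * f (s₀ - t) := by
    change ((∫ t, t ^ 2 * (R t * f (s₀ - t))) / (∫ t, R t * f (s₀ - t)) - m ^ 2) * _ = _
    field_simp
  rw [hD_eq, abs_div, abs_of_pos hZ, div_le_iff₀ hZ, mul_assoc, hvar]
  exact hcov

end LogDeriv

theorem stmt_16_general (f : ℝ → ℝ) (c₁ : ℝ)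
    (hpos : ∀ x, 0 < f x) (hf : ContDiff ℝ 2 f)
    (hg : ∀ x, |deriv (fun y => deriv f y / f y) x| ≤ c₁)
    (n : ℕ) (x : Fin n → ℝ)
    (den num num2 : (Fin n → ℝ) → ℝ)
    (hden : ∀ z, den z = ∫ t : ℝ, ∏ i, f (z i - t))
    (hnum : ∀ z, num z = ∫ t : ℝ, t * ∏ i, f (z i - t))
    (hnum2 : ∀ z, num2 z = ∫ t : ℝ, t ^ 2 * ∏ i, f (z i - t))
    (hint : ∀ z : Fin n → ℝ,
      Integrable (fun t : ℝ => ∏ i, f (z i - t)) ∧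
      Integrable (fun t : ℝ => t * ∏ i, f (z i - t)) ∧
      Integrable (fun t : ℝ => t ^ 2 * ∏ i, f (z i - t)))
    (θS V : (Fin n → ℝ) → ℝ)
    (hθS : ∀ z, θS z = num z / den z)
    (hV : ∀ z, V z = num2 z / den z - (θS z) ^ 2)
    (i : Fin n) (D : ℝ)
    (hD : HasDerivAt (fun s => θS (Function.update x i s)) D (x i)) :
    |D| ≤ c₁ * (V x + 2 * (θS x) ^ 2) := by
  set R : ℝ → ℝ := fun t => ∏ j ∈ Finset.univ \ {i}, f (x j - t)
  have hprod : ∀ s t, ∏ j, f (Function.update x i s j - t) = R t * f (s - t) := fun s t => by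
    rw [mul_comm, ← Finset.prod_update_of_mem (Finset.mem_univ i)]
    exact Finset.prod_congr rfl fun j _ => Function.apply_update (fun _ y => f (y - t)) x i s j
  have hprod_x : ∀ t, ∏ j, f (x j - t) = R t * f (x i - t) := by
    simpa only [Function.update_eq_self] using hprod (x i)
  have hθ : ∀ s, θS (Function.update x i s) = posteriorMean fun t => R t * f (s - t) :=
    fun s => by simp only [hθS, hnum, hden, hprod, posteriorMean]
  have hθx : θS x = posteriorMean fun t => R t * f (x i - t) := by
    simpa only [Function.update_eq_self] using hθ (x i)
  have hVx : V x = posteriorVariance fun t => R t * f (x i - t) := by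
    simp only [hV, hθx, hnum2, hden, hprod_x, posteriorVariance]
  have hR : AEStronglyMeasurable R :=
    (continuous_finsetProd _ fun j _ => hf.continuous.comp
      (continuous_const.sub continuous_id)).aestronglyMeasurable
  have hint_R := fun s => hint (Function.update x i s)
  simp only [hprod] at hint_R
  have hbound := abs_le_mul_posteriorVariance_of_hasDerivAt hpos hf hg hR
    (fun t => Finset.prod_pos fun j _ => hpos _) (fun s => (hint_R s).1) (fun s => (hint_R s).2.1)
    (fun s => (hint_R s).2.2) (by simpa only [hθ] using hD)
  have hθ_sq : 0 ≤ c₁ * θS x ^ 2 := mul_nonneg ((abs_nonneg _).trans (hg 0)) (sq_nonneg _)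
  rw [hVx]
  linarith

/-- The sender's posterior mean `θS z = (∫ t, t ∏ᵢ f (z i - t)) / (∫ t, ∏ᵢ f (z i - t))`
(flat prior) has partial derivatives bounded by `c₁ (Var_posterior + 2 θS²)` whenever the
log-derivative `g = f' / f` of the density `f` has `|g'| ≤ c₁`. -/
theorem stmt_16 (f : ℝ → ℝ) (c₁ : ℝ) (hc₁ : 0 < c₁)
    (hpos : ∀ x, 0 < f x) (hf : ContDiff ℝ 2 f)
    (hg : ∀ x, |deriv (fun y => deriv f y / f y) x| ≤ c₁)
    (n : ℕ) (x : Fin n → ℝ)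
    (den num num2 : (Fin n → ℝ) → ℝ)
    (hden : ∀ z, den z = ∫ t : ℝ, ∏ i, f (z i - t))
    (hnum : ∀ z, num z = ∫ t : ℝ, t * ∏ i, f (z i - t))
    (hnum2 : ∀ z, num2 z = ∫ t : ℝ, t ^ 2 * ∏ i, f (z i - t))
    (hint : ∀ z : Fin n → ℝ,
      Integrable (fun t : ℝ => ∏ i, f (z i - t)) ∧
      Integrable (fun t : ℝ => t * ∏ i, f (z i - t)) ∧
      Integrable (fun t : ℝ => t ^ 2 * ∏ i, f (z i - t)))
    (hden0 : ∀ z, den z ≠ 0)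
    (θS V : (Fin n → ℝ) → ℝ)
    (hθS : ∀ z, θS z = num z / den z)
    (hV : ∀ z, V z = num2 z / den z - (θS z) ^ 2)
    (i : Fin n) (D : ℝ)
    (hD : HasDerivAt (fun s => θS (Function.update x i s)) D (x i)) :
    |D| ≤ c₁ * (V x + 2 * (θS x) ^ 2) :=
  stmt_16_general f c₁ hpos hf hg n x den num num2 hden hnum hnum2 hint θS V hθS hV i D hD
end
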